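/- arXiv:2103.00078 — 2 statements merged into one kernel-verified Lean document; each statement's English description precedes it below -/
import Mathlib

section
/- Let F : F_2^n → F_2^m be a quadratic function. For 0 ≤ r ≤ min(m,n), let RkDist_F[r] = #{a ∈ F_2^n : rank(Jlin_F(a)) = r} and let D_F[k] = #{(a,b) ∈ (F_2^n \ {0}) × F_2^m : δ_F(a,b) = k}. Then for every r, RkDist_F[r] = 2^{-r} · D_F[2^{n-r}], i.e., 2^r · RkDist_F[r] = D_F[2^{n-r}]. -/
open Matrix

/-- `F : F_2^n → F_2^m` is quadratic: each coordinate is the evaluation of a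
polynomial of total degree at most 2 (equivalently, its ANF has degree ≤ 2). -/
def IsQuadratic {n m : ℕ} (F : (Fin n → ZMod 2) → (Fin m → ZMod 2)) : Prop :=
  ∀ i : Fin m, ∃ p : MvPolynomial (Fin n) (ZMod 2),
    p.totalDegree ≤ 2 ∧ ∀ x, F x i = MvPolynomial.eval x p

/-- Linear part of the Jacobian: entries `Δ_{e_j}F_i(x) + Δ_{e_j}F_i(0)`. -/
def Jlin {n m : ℕ} (F : (Fin n → ZMod 2) → (Fin m → ZMod 2))
    (x : Fin n → ZMod 2) : Matrix (Fin m) (Fin n) (ZMod 2) :=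
  Matrix.of fun i j =>
    F (x + Pi.single j 1) i + F x i + F (Pi.single j 1) i + F 0 i

/-- DDT entry `δ_F(a,b) = #{x : F(x+a)+F(x)=b}`. -/
def ddt {n m : ℕ} (F : (Fin n → ZMod 2) → (Fin m → ZMod 2))
    (a : Fin n → ZMod 2) (b : Fin m → ZMod 2) : ℕ :=
  (Finset.univ.filter fun x => F (x + a) + F x = b).card

/-! A quadratic `F` has vanishing third differences, so for fixed `a` the derivative
`x ↦ F (x + a) + F x` is affine, with linear part `x ↦ Jlin F a *ᵥ x` and constant `F a + F 0`.
Hence `δ_F(a, b)` is the size of a fibre of that linear map: it equals `2 ^ (n - rank)` for the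
`2 ^ rank` values of `b` in the translated range, and `0` for all other `b`. Summing over `a ≠ 0`
gives the identity. -/

open Finset

namespace MvPolynomial

variable {σ R : Type*} [CommSemiring R]

theorem eval_monomial_eq_prod_map_toMultiset (d : σ →₀ ℕ) (c : R) (x : σ → R) :
    eval x (monomial d c) = c * (d.toMultiset.map x).prod := by
  rw [eval_monomial, Finsupp.toMultiset_map, Finsupp.prod_toMultiset,
    Finsupp.prod_mapDomain_index (fun _ => pow_zero _) (fun _ => pow_add _)]

theorem eval_add_add_add_eq_of_totalDegree_le_two {p : MvPolynomial σ R}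
    (hp : p.totalDegree ≤ 2) (x y z : σ → R) :
    eval (x + y + z) p + eval x p + eval y p + eval z p
      = eval (x + y) p + eval (x + z) p + eval (y + z) p + eval 0 p := by
  rw [p.as_sum]
  simp only [map_sum, ← sum_add_distrib]
  refine sum_congr rfl fun d hd => ?_
  have hcard : Multiset.card d.toMultiset ≤ 2 := by
    rw [Finsupp.card_toMultiset]
    exact (le_totalDegree hd).trans hp
  simp only [eval_monomial_eq_prod_map_toMultiset]
  obtain h | ⟨i, h⟩ | ⟨i, j, h⟩ : d.toMultiset = 0 ∨ (∃ i, d.toMultiset = {i}) ∨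
      ∃ i j, d.toMultiset = {i, j} := by
    rw [← Multiset.card_eq_zero, ← Multiset.card_eq_one, ← Multiset.card_eq_two]
    omega
  all_goals
    simp only [h, Multiset.insert_eq_cons, Multiset.map_zero, Multiset.map_cons,
      Multiset.map_singleton, Multiset.prod_zero, Multiset.prod_cons, Multiset.prod_singleton,
      Pi.add_apply, Pi.zero_apply] <;> ring

end MvPolynomial

section SecondDifference

variable {V W : Type*} [AddCommGroup V] [AddCommGroup W]

def secondDiff (F : V → W) (a x : V) : W := F (a + x) - F a - F x + F 0

theorem secondDiff_add_right {F : V → W}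
    (hF : ∀ x y z, F (x + y + z) + F x + F y + F z = F (x + y) + F (x + z) + F (y + z) + F 0)
    (a x y : V) : secondDiff F a (x + y) = secondDiff F a x + secondDiff F a y := by
  have h := hF a x y
  simp only [secondDiff, ← add_assoc]
  linear_combination (norm := abel) h

end SecondDifference

namespace Matrix

variable {K ι κ : Type*} [Field K] [Fintype K] [DecidableEq K] [Fintype ι] [Fintype κ]
  [DecidableEq κ]

theorem card_filter_mulVec_eq_zero (A : Matrix ι κ K) :
    #{x | A *ᵥ x = 0} = Fintype.card K ^ (Fintype.card κ - A.rank) := by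
  have hrank := LinearMap.finrank_range_add_finrank_ker A.mulVecLin
  rw [Module.finrank_fintype_fun_eq_card, ← rank] at hrank
  rw [← Fintype.card_subtype, ← Nat.card_eq_fintype_card]
  change Nat.card (LinearMap.ker A.mulVecLin) = _
  rw [Module.natCard_eq_pow_finrank (K := K), Nat.card_eq_fintype_card]
  congr 1
  omega

theorem card_filter_mulVec_eq_of_mem_range (A : Matrix ι κ K) {c : ι → K}
    (hc : c ∈ LinearMap.range A.mulVecLin) :
    #{x | A *ᵥ x = c} = Fintype.card K ^ (Fintype.card κ - A.rank) := by
  rw [← card_filter_mulVec_eq_zero]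
  exact AddMonoidHom.card_fiber_eq_of_mem_range A.mulVecLin hc ⟨0, map_zero _⟩

theorem card_filter_card_filter_mulVec_eq [DecidableEq ι] (A : Matrix ι κ K) {r : ℕ}
    (hr : r ≤ Fintype.card κ) :
    #{c | #{x | A *ᵥ x = c} = Fintype.card K ^ (Fintype.card κ - r)} =
      if A.rank = r then Fintype.card K ^ r else 0 := by
  classical
  have hfiber (c : ι → K) : #{x | A *ᵥ x = c} = Fintype.card K ^ (Fintype.card κ - r) ↔
      A.rank = r ∧ c ∈ LinearMap.range A.mulVecLin := by
    by_cases hc : c ∈ LinearMap.range A.mulVecLin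
    · have hA := A.rank_le_card_width
      rw [card_filter_mulVec_eq_of_mem_range A hc,
        (Nat.pow_right_injective Fintype.one_lt_card).eq_iff]
      simp only [hc, and_true]
      omega
    · have hempty : #{x | A *ᵥ x = c} = 0 := by
        rw [card_eq_zero, filter_eq_empty_iff]
        exact fun x _ hx => hc ⟨x, hx⟩
      simp only [hempty, hc, and_false, iff_false]
      exact (pow_pos Fintype.card_pos _).ne
  rw [filter_congr fun c _ => hfiber c]
  split_ifs with hA
  · simp only [hA, true_and]
    rw [← hA, ← Fintype.card_subtype, ← Nat.card_eq_fintype_card]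
    change Nat.card (LinearMap.range A.mulVecLin) = _
    rw [Module.natCard_eq_pow_finrank (K := K), Nat.card_eq_fintype_card, rank]
  · simp [hA]

end Matrix

section Quadratic

variable {n m : ℕ} {F : (Fin n → ZMod 2) → (Fin m → ZMod 2)}

theorem IsQuadratic.map_add_add_add (hF : IsQuadratic F) (x y z : Fin n → ZMod 2) :
    F (x + y + z) + F x + F y + F z = F (x + y) + F (x + z) + F (y + z) + F 0 := by
  funext i
  obtain ⟨p, hp, hFp⟩ := hF i
  simpa only [Pi.add_apply, hFp] using
    MvPolynomial.eval_add_add_add_eq_of_totalDegree_le_two hp x y z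

theorem IsQuadratic.Jlin_mulVec (hF : IsQuadratic F) (a x : Fin n → ZMod 2) :
    Jlin F a *ᵥ x = secondDiff F a x := by
  let L := (AddMonoidHom.mk' (secondDiff F a)
    (secondDiff_add_right hF.map_add_add_add a)).toZModLinearMap 2
  have hJ : Jlin F a = LinearMap.toMatrix' L := by
    ext i j
    simp [Jlin, LinearMap.toMatrix'_apply, L, secondDiff, ZModModule.sub_eq_add]
  rw [hJ, LinearMap.toMatrix'_mulVec]
  rfl

theorem IsQuadratic.map_add_add_map_eq_Jlin_mulVec (hF : IsQuadratic F) (a x : Fin n → ZMod 2) :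
    F (x + a) + F x = Jlin F a *ᵥ x + F a + F 0 := by
  rw [hF.Jlin_mulVec, secondDiff, add_comm x a]
  linear_combination (norm := abel) ZModModule.add_self (F x) - ZModModule.add_self (F 0)

theorem IsQuadratic.card_filter_ddt_eq (hF : IsQuadratic F) (a : Fin n → ZMod 2) {r : ℕ}
    (hr : r ≤ n) :
    #{b | ddt F a b = 2 ^ (n - r)} = if (Jlin F a).rank = r then 2 ^ r else 0 := by
  have hcount := (Jlin F a).card_filter_card_filter_mulVec_eq (r := r) (by simpa using hr)
  simp only [ZMod.card, Fintype.card_fin] at hcount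
  rw [← hcount]
  simp only [ddt, hF.map_add_add_map_eq_Jlin_mulVec]
  refine (card_equiv (Equiv.addRight (F a + F 0)) fun c => ?_).symm
  simp only [Equiv.coe_addRight, mem_filter, mem_univ, true_and, ← add_assoc, add_left_inj]

end Quadratic

theorem rank_distribution_vs_differential_spectrum {n m : ℕ}
    (F : (Fin n → ZMod 2) → (Fin m → ZMod 2)) (hF : IsQuadratic F)
    (r : ℕ) (hr : r ≤ min m n) :
    2 ^ r * Nat.card {a : Fin n → ZMod 2 | a ≠ 0 ∧ (Jlin F a).rank = r}
      = Nat.card {p : (Fin n → ZMod 2) × (Fin m → ZMod 2) |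
          p.1 ≠ 0 ∧ ddt F p.1 p.2 = 2 ^ (n - r)} := by
  classical
  have hrn : r ≤ n := hr.trans (min_le_right m n)
  have hfiber (a : Fin n → ZMod 2) : #{b | a ≠ 0 ∧ ddt F a b = 2 ^ (n - r)} =
      if a ≠ 0 ∧ (Jlin F a).rank = r then 2 ^ r else 0 := by
    by_cases ha : a = 0
    · simp [ha]
    · simp [ha, hF.card_filter_ddt_eq a hrn]
  simp only [Nat.card_eq_fintype_card, Fintype.card_subtype]
  calc 2 ^ r * #{a | a ≠ 0 ∧ (Jlin F a).rank = r}
      = ∑ a, if a ≠ 0 ∧ (Jlin F a).rank = r then 2 ^ r else 0 := by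
        rw [← sum_filter, sum_const, smul_eq_mul, mul_comm]
    _ = ∑ a, #{b | a ≠ 0 ∧ ddt F a b = 2 ^ (n - r)} := sum_congr rfl fun a _ => (hfiber a).symm
    _ = #{p : _ × _ | p.1 ≠ 0 ∧ ddt F p.1 p.2 = 2 ^ (n - r)} := by
        rw [card_filter, Fintype.sum_prod_type]
        simp only [card_filter]
end

section
/- Let F : F_2^n → F_2^n be a quadratic function. Then F is APN if and only if there exists a unique function π : F_2^n → F_2^n with π(0)=0 and π(x) ≠ 0 for all x ≠ 0 such that for all x, a ∈ F_2^n, ⟨π(a), F(x)+F(x+a)+F(0)+F(a)⟩ = 0, where ⟨·,·⟩ is the canonical inner product on F_2^n. -/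
open Matrix

/-! For quadratic `F` the third derivative vanishes, so `x ↦ F x + F (x + a) + F 0 + F a` is
linear; its kernel contains `0` and `a`, and every fibre of it has the size of the kernel. Hence
`δ_F(a, ·) ≤ 2` iff this kernel is `{0, a}`, iff (rank–nullity, and row rank = column rank) the
vectors orthogonal to its image form a line `{0, y}`; the unique such `y ≠ 0` is `π a`. -/

section ThirdDifference

variable {V W : Type*}

/-- Over a field of characteristic 2 this is the third derivative `D_x D_y D_z g` at `0`. -/
def thirdDiff [Add V] [Zero V] [Add W] (g : V → W) (x y z : V) : W :=
  g (x + y + z) + g (x + y) + g (x + z) + g (y + z) + g x + g y + g z + g 0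

lemma thirdDiff_sum [Add V] [Zero V] [AddCommMonoid W] {ι : Type*} (s : Finset ι)
    (g : ι → V → W) (x y z : V) :
    thirdDiff (fun v => ∑ i ∈ s, g i v) x y z = ∑ i ∈ s, thirdDiff (g i) x y z := by
  simp only [thirdDiff, Finset.sum_add_distrib]

lemma thirdDiff_const_mul [Add V] [Zero V] [NonUnitalNonAssocSemiring W] (c : W) (g : V → W)
    (x y z : V) : thirdDiff (fun v => c * g v) x y z = c * thirdDiff g x y z := by
  simp only [thirdDiff, mul_add]

end ThirdDifference

namespace MvPolynomial

variable {σ : Type*}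

lemma eval_monomial_zmod_two (s : σ →₀ ℕ) (c : ZMod 2) (v : σ → ZMod 2) :
    eval v (monomial s c) = c * ∏ i ∈ s.support, v i := by
  have hidem : ∀ t : ZMod 2, IsIdempotentElem t := by unfold IsIdempotentElem; decide
  rw [eval_monomial, Finsupp.prod]
  exact congrArg _ <| Finset.prod_congr rfl fun i hi =>
    (hidem (v i)).pow_eq (Finsupp.mem_support_iff.mp hi)

lemma thirdDiff_prod_eq_zero {t : Finset σ} (ht : t.card ≤ 2) (x y z : σ → ZMod 2) :
    thirdDiff (fun v => ∏ i ∈ t, v i) x y z = 0 := by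
  classical
  obtain rfl | ⟨i, rfl⟩ | ⟨i, j, hij, rfl⟩ :
      t = ∅ ∨ (∃ i, t = {i}) ∨ ∃ i j, i ≠ j ∧ t = {i, j} := by
    interval_cases h : t.card
    · exact .inl (Finset.card_eq_zero.mp h)
    · exact .inr (.inl (Finset.card_eq_one.mp h))
    · exact .inr (.inr (Finset.card_eq_two.mp h))
  · simp only [thirdDiff, Finset.prod_empty]
    decide
  · simp only [thirdDiff, Finset.prod_singleton, Pi.add_apply, Pi.zero_apply]
    generalize x i = A, y i = B, z i = C
    revert A B C; decide
  · simp only [thirdDiff, Finset.prod_pair hij, Pi.add_apply, Pi.zero_apply]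
    generalize x i = A, y i = B, z i = C, x j = A', y j = B', z j = C'
    revert A B C A' B' C'; decide

lemma card_support_le_totalDegree {R : Type*} [CommSemiring R] {p : MvPolynomial σ R} {s : σ →₀ ℕ}
    (hs : s ∈ p.support) : s.support.card ≤ p.totalDegree := by
  calc s.support.card = s.support.card • 1 := by rw [smul_eq_mul, mul_one]
    _ ≤ ∑ i ∈ s.support, s i :=
        Finset.card_nsmul_le_sum _ _ _ fun i hi => Nat.one_le_iff_ne_zero.mpr (by simpa using hi)
    _ ≤ p.totalDegree := le_totalDegree hs

theorem thirdDiff_eval_eq_zero {p : MvPolynomial σ (ZMod 2)} (hp : p.totalDegree ≤ 2)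
    (x y z : σ → ZMod 2) : thirdDiff (fun v => eval v p) x y z = 0 := by
  have hsum : (fun v => eval v p) = fun v => ∑ s ∈ p.support, eval v (monomial s (coeff s p)) := by
    funext v
    conv_lhs => rw [← p.support_sum_monomial_coeff]
    rw [map_sum]
  rw [hsum, thirdDiff_sum]
  refine Finset.sum_eq_zero fun s hs => ?_
  simp only [eval_monomial_zmod_two, thirdDiff_const_mul]
  rw [thirdDiff_prod_eq_zero ((card_support_le_totalDegree hs).trans hp), mul_zero]

end MvPolynomial

theorem IsQuadratic.thirdDiff_eq_zero {n m : ℕ} {F : (Fin n → ZMod 2) → (Fin m → ZMod 2)}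
    (hF : IsQuadratic F) (x y z : Fin n → ZMod 2) : thirdDiff F x y z = 0 := by
  funext i
  obtain ⟨p, hp, hFp⟩ := hF i
  simpa only [thirdDiff, Pi.add_apply, Pi.zero_apply, hFp] using
    MvPolynomial.thirdDiff_eval_eq_zero hp x y z

section LinDeriv

variable {V W : Type*} [AddCommGroup V] [AddCommGroup W]

def linDeriv (F : V → W) (a x : V) : W := F x + F (x + a) + F 0 + F a

variable [Module (ZMod 2) W] {F : V → W}

lemma linDeriv_add (hF : ∀ x y z, thirdDiff F x y z = 0) (a x y : V) :
    linDeriv F a (x + y) = linDeriv F a x + linDeriv F a y := by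
  have h := hF x y a
  unfold thirdDiff at h
  rw [← sub_eq_zero, ZModModule.sub_eq_add]
  unfold linDeriv
  linear_combination (norm := module) h + ZModModule.add_self (F 0) + ZModModule.add_self (F a)

variable [Module (ZMod 2) V]

lemma linDeriv_self (F : V → W) (a : V) : linDeriv F a a = 0 := by
  rw [linDeriv, ZModModule.add_self a]
  linear_combination (norm := module) ZModModule.add_self (F a) + ZModModule.add_self (F 0)

def linDerivₗ (hF : ∀ x y z, thirdDiff F x y z = 0) (a : V) : V →ₗ[ZMod 2] W :=
  (AddMonoidHom.mk' (linDeriv F a) (linDeriv_add hF a)).toZModLinearMap 2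

@[simp]
lemma linDerivₗ_apply (hF : ∀ x y z, thirdDiff F x y z = 0) (a x : V) :
    linDerivₗ hF a x = linDeriv F a x :=
  rfl

lemma mem_ker_linDerivₗ_self (hF : ∀ x y z, thirdDiff F x y z = 0) (a : V) :
    a ∈ LinearMap.ker (linDerivₗ hF a) :=
  linDeriv_self F a

end LinDeriv

lemma ddt_eq_card_filter_linDeriv {n m : ℕ} (F : (Fin n → ZMod 2) → (Fin m → ZMod 2))
    (a : Fin n → ZMod 2) (b : Fin m → ZMod 2) :
    ddt F a b = (Finset.univ.filter fun x => linDeriv F a x = b + (F 0 + F a)).card := by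
  unfold ddt linDeriv
  congr 1
  ext x
  simp only [Finset.mem_filter, Finset.mem_univ, true_and]
  rw [add_assoc, add_left_inj, add_comm]

namespace LinearMap

open Finset

variable {R M N : Type*} [Ring R] [AddCommGroup M] [AddCommGroup N] [Module R M] [Module R N]
  [Fintype M] [DecidableEq N]

lemma natCard_ker_eq_card_filter (f : M →ₗ[R] N) : Nat.card (ker f) = #{x | f x = 0} := by
  rw [← Nat.card_eq_finsetCard]
  exact Nat.card_congr (Equiv.subtypeEquivRight fun x => by simp)

lemma card_filter_eq_le_natCard_ker (f : M →ₗ[R] N) (c : N) :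
    #{x | f x = c} ≤ Nat.card (ker f) := by
  rw [natCard_ker_eq_card_filter]
  obtain h | ⟨x₀, hx₀⟩ := Finset.eq_empty_or_nonempty {x | f x = c}
  · simp [h]
  · rw [mem_filter] at hx₀
    refine card_le_card_of_injOn (· - x₀) (fun x hx => ?_) (sub_left_injective.injOn)
    simp_all

lemma forall_card_filter_eq_le_iff (f : M →ₗ[R] N) (k : ℕ) :
    (∀ c, #{x | f x = c} ≤ k) ↔ Nat.card (ker f) ≤ k :=
  ⟨fun h => natCard_ker_eq_card_filter f ▸ h 0,
    fun h c => (card_filter_eq_le_natCard_ker f c).trans h⟩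

end LinearMap

section Transpose

open LinearMap

variable {K n : Type*} [Field K] [Fintype n]

lemma LinearMap.mem_ker_toMatrix'_transpose_iff [DecidableEq n] (f : (n → K) →ₗ[K] n → K)
    (y : n → K) :
    y ∈ ker (toMatrix' f)ᵀ.mulVecLin ↔ ∀ x, y ⬝ᵥ f x = 0 := by
  simp only [mem_ker, Matrix.mulVecLin_apply, mulVec_transpose, ← dotProduct_eq_zero_iff,
    ← dotProduct_mulVec, toMatrix'_mulVec]

lemma Matrix.finrank_ker_mulVecLin_transpose (A : Matrix n n K) :
    Module.finrank K (ker Aᵀ.mulVecLin) = Module.finrank K (ker A.mulVecLin) := by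
  have h := finrank_range_add_finrank_ker A.mulVecLin
  have hT := finrank_range_add_finrank_ker Aᵀ.mulVecLin
  have hrank : Module.finrank K (range Aᵀ.mulVecLin) = Module.finrank K (range A.mulVecLin) :=
    A.rank_transpose
  omega

lemma LinearMap.natCard_ker_toMatrix'_transpose [DecidableEq n] [Finite K]
    (f : (n → K) →ₗ[K] n → K) :
    Nat.card (ker (toMatrix' f)ᵀ.mulVecLin) = Nat.card (ker f) := by
  rw [Module.natCard_eq_pow_finrank (K := K) (V := ker (toMatrix' f)ᵀ.mulVecLin),
    Module.natCard_eq_pow_finrank (K := K) (V := ker f),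
    Matrix.finrank_ker_mulVecLin_transpose, ← Matrix.toLin'_apply', Matrix.toLin'_toMatrix']

end Transpose

lemma Submodule.existsUnique_ne_zero_mem_iff {R M : Type*} [Semiring R] [AddCommMonoid M]
    [Module R M] (S : Submodule R M) : (∃! y, y ≠ 0 ∧ y ∈ S) ↔ Nat.card S = 2 := by
  rw [Nat.card_eq_two_iff' (0 : S)]
  constructor
  · rintro ⟨y, ⟨hy0, hyS⟩, huniq⟩
    refine ⟨⟨y, hyS⟩, (Submodule.mk_eq_zero S hyS).not.mpr hy0, fun z hz => Subtype.ext ?_⟩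
    exact huniq z ⟨(Submodule.coe_eq_zero).not.mpr hz, z.2⟩
  · rintro ⟨y, hy0, huniq⟩
    refine ⟨y, ⟨(Submodule.coe_eq_zero).not.mpr hy0, y.2⟩, fun z ⟨hz0, hzS⟩ => ?_⟩
    exact congrArg Subtype.val (huniq ⟨z, hzS⟩ ((Submodule.mk_eq_zero S hzS).not.mpr hz0))

lemma existsUnique_pi_iff {α : Sort*} {β : α → Sort*} {R : ∀ a, β a → Prop} :
    (∃! f : ∀ a, β a, ∀ a, R a (f a)) ↔ ∀ a, ∃! b, R a b := by
  classical
  constructor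
  · rintro ⟨f, hf, huniq⟩ a
    refine ⟨f a, hf a, fun b hb => ?_⟩
    have hupdate : Function.update f a b = f := huniq _ fun a' => by
      rcases eq_or_ne a' a with rfl | h
      · simpa using hb
      · simpa [h] using hf a'
    simpa using congrFun hupdate a
  · intro h
    choose f hf huniq using h
    exact ⟨f, hf, fun g hg => funext fun a => huniq a _ (hg a)⟩

lemma existsUnique_nonvanishing_section_iff {α β : Type*} [Zero α] [Zero β] {Q : α → β → Prop}
    (hQ : Q 0 0) :
    (∃! π : α → β, π 0 = 0 ∧ (∀ a, a ≠ 0 → π a ≠ 0) ∧ ∀ a, Q a (π a)) ↔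
      ∀ a, a ≠ 0 → ∃! y, y ≠ 0 ∧ Q a y := by
  have hsection : ∀ π : α → β, (π 0 = 0 ∧ (∀ a, a ≠ 0 → π a ≠ 0) ∧ ∀ a, Q a (π a)) ↔
      ∀ a, (π a = 0 ↔ a = 0) ∧ Q a (π a) := by
    refine fun π => ⟨fun ⟨h0, hne, hπQ⟩ a => ⟨⟨fun h => ?_, ?_⟩, hπQ a⟩, fun h => ?_⟩
    · exact by_contra fun ha => hne a ha h
    · rintro rfl
      exact h0
    · exact ⟨(h 0).1.2 rfl, fun a ha hπ => ha ((h a).1.1 hπ), fun a => (h a).2⟩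
  refine (existsUnique_congr hsection).trans <| (existsUnique_pi_iff (β := fun _ => β)
    (R := fun a y => (y = 0 ↔ a = 0) ∧ Q a y)).trans <| forall_congr' fun a => ?_
  rcases eq_or_ne a 0 with rfl | ha
  · simpa using ⟨0, ⟨rfl, hQ⟩, fun y hy => hy.1⟩
  · simp [ha]

theorem IsQuadratic.forall_ddt_le_two_iff {n : ℕ} {F : (Fin n → ZMod 2) → (Fin n → ZMod 2)}
    (hF : IsQuadratic F) {a : Fin n → ZMod 2} (ha : a ≠ 0) :
    (∀ b, ddt F a b ≤ 2) ↔ ∃! y, y ≠ 0 ∧ ∀ x, y ⬝ᵥ linDeriv F a x = 0 := by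
  classical
  set f := linDerivₗ hF.thirdDiff_eq_zero a
  have hddt : (∀ b, ddt F a b ≤ 2) ↔ Nat.card (LinearMap.ker f) ≤ 2 := by
    refine Iff.trans ?_ (LinearMap.forall_card_filter_eq_le_iff f 2)
    exact (Equiv.addRight (F 0 + F a)).forall_congr fun b => by
      rw [ddt_eq_card_filter_linDeriv]; rfl
  have hker : 2 ≤ Nat.card (LinearMap.ker f) := by
    have : Nontrivial (LinearMap.ker f) :=
      nontrivial_of_ne 0 ⟨a, mem_ker_linDerivₗ_self _ a⟩ (by simpa [Subtype.ext_iff] using ha.symm)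
    exact Finite.one_lt_card
  have horth : (∃! y, y ≠ 0 ∧ ∀ x, y ⬝ᵥ linDeriv F a x = 0) ↔
      Nat.card (LinearMap.ker f) = 2 := by
    rw [← LinearMap.natCard_ker_toMatrix'_transpose, ← Submodule.existsUnique_ne_zero_mem_iff]
    simp only [LinearMap.mem_ker_toMatrix'_transpose_iff, f, linDerivₗ_apply]
  rw [hddt, horth]
  omega

theorem apn_iff_unique_orthoDerivative {n : ℕ}
    (F : (Fin n → ZMod 2) → (Fin n → ZMod 2)) (hF : IsQuadratic F) :
    (∀ a : Fin n → ZMod 2, a ≠ 0 → ∀ b : Fin n → ZMod 2, ddt F a b ≤ 2) ↔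
      (∃! π : (Fin n → ZMod 2) → (Fin n → ZMod 2),
        π 0 = 0 ∧ (∀ x : Fin n → ZMod 2, x ≠ 0 → π x ≠ 0) ∧
        ∀ x a : Fin n → ZMod 2,
          dotProduct (π a) (F x + F (x + a) + F 0 + F a) = 0) := by
  calc (∀ a : Fin n → ZMod 2, a ≠ 0 → ∀ b, ddt F a b ≤ 2)
      ↔ ∀ a : Fin n → ZMod 2, a ≠ 0 → ∃! y, y ≠ 0 ∧ ∀ x, y ⬝ᵥ linDeriv F a x = 0 :=
        forall₂_congr fun _ ha => hF.forall_ddt_le_two_iff ha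
    _ ↔ ∃! π : (Fin n → ZMod 2) → (Fin n → ZMod 2), π 0 = 0 ∧ (∀ a, a ≠ 0 → π a ≠ 0) ∧
          ∀ a x, π a ⬝ᵥ linDeriv F a x = 0 :=
        (existsUnique_nonvanishing_section_iff (by simp)).symm
    _ ↔ _ := existsUnique_congr fun π => and_congr_right' <| and_congr_right' forall_comm
end
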